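/- Every formula φ of EMDL is 2^{vrank(φ)}-coherent: for every Kripke model K and every team T of K, K,T ⊨ φ if and only if K,T' ⊨ φ for all subteams T' ⊆ T with |T'| ≤ 2^{vrank(φ)}. Here vrank(φ) is the number of occurrences of ⊻ in the ML(⊻)-formula obtained from φ by replacing each dependence atom =(φ₁,…,φₙ,ψ) by ⋁_{a₁,…,aₙ ∈ {⊥,⊤}} (φ₁^{a₁} ∧ … ∧ φₙ^{aₙ} ∧ (ψ ⊻ ψ^⊥)). -/

import Mathlib

/-- A Kripke model over a (nonempty) type `W` of worlds: an accessibility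
relation `R` and a valuation `V`. -/
structure Kripke (W : Type) where
  R : W → W → Prop
  V : ℕ → Set W

/-- The image team `R[T] = {w | ∃ v ∈ T, v R w}`. -/
def Kripke.img {W : Type} (K : Kripke W) (T : Set W) : Set W :=
  {w | ∃ v ∈ T, K.R v w}

/-- `T[R]S`: every world of `T` has an `R`-successor in `S` and every world of
`S` has an `R`-predecessor in `T`. -/
def Kripke.step {W : Type} (K : Kripke W) (T S : Set W) : Prop :=
  (∀ w ∈ T, ∃ v ∈ S, K.R w v) ∧ (∀ v ∈ S, ∃ w ∈ T, K.R w v)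

/-- Formulas of modal logic `ML` in negation normal form. -/
inductive MLForm : Type
  | pos : ℕ → MLForm
  | neg : ℕ → MLForm
  | and : MLForm → MLForm → MLForm
  | or  : MLForm → MLForm → MLForm
  | dia : MLForm → MLForm
  | box : MLForm → MLForm

/-- Team semantics for `ML`. A team is a set of worlds. -/
def MLSat {W : Type} (K : Kripke W) : Set W → MLForm → Prop
  | T, .pos p => T ⊆ K.V p
  | T, .neg p => T ∩ K.V p = ∅
  | T, .and φ ψ => MLSat K T φ ∧ MLSat K T ψ
  | T, .or φ ψ => ∃ T₁ T₂, T₁ ∪ T₂ = T ∧ MLSat K T₁ φ ∧ MLSat K T₂ ψ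
  | T, .dia φ => ∃ T', K.step T T' ∧ MLSat K T' φ
  | T, .box φ => MLSat K (K.img T) φ

/-- Formulas of `ML(⊻)`: modal logic in negation normal form extended with
intuitionistic disjunction `⊻` (`idis`). -/
inductive MLIForm : Type
  | pos : ℕ → MLIForm
  | neg : ℕ → MLIForm
  | and : MLIForm → MLIForm → MLIForm
  | or  : MLIForm → MLIForm → MLIForm
  | dia : MLIForm → MLIForm
  | box : MLIForm → MLIForm
  | idis : MLIForm → MLIForm → MLIForm

/-- Team semantics for `ML(⊻)`. -/
def MLISat {W : Type} (K : Kripke W) : Set W → MLIForm → Prop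
  | T, .pos p => T ⊆ K.V p
  | T, .neg p => T ∩ K.V p = ∅
  | T, .and φ ψ => MLISat K T φ ∧ MLISat K T ψ
  | T, .or φ ψ => ∃ T₁ T₂, T₁ ∪ T₂ = T ∧ MLISat K T₁ φ ∧ MLISat K T₂ ψ
  | T, .dia φ => ∃ T', K.step T T' ∧ MLISat K T' φ
  | T, .box φ => MLISat K (K.img T) φ
  | T, .idis φ ψ => MLISat K T φ ∨ MLISat K T ψ

/-- `vrank φ`: the number of occurrences of `⊻` in an `ML(⊻)`-formula. -/
def vrank : MLIForm → ℕ
  | .pos _ => 0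
  | .neg _ => 0
  | .and φ ψ => vrank φ + vrank ψ
  | .or φ ψ => vrank φ + vrank ψ
  | .dia φ => vrank φ
  | .box φ => vrank φ
  | .idis φ ψ => vrank φ + vrank ψ + 1

/-- All tuples (lists) of `n` signs (Booleans), i.e. `{⊥,⊤}ⁿ`. -/
def allBLists : ℕ → List (List Bool)
  | 0 => [[]]
  | n + 1 => (allBLists n).flatMap fun l => [true :: l, false :: l]

/-- `φ^⊥`: the negation normal form of `¬φ`, for an `ML`-formula `φ` in
negation normal form. -/
def MLForm.nnfNeg : MLForm → MLForm
  | .pos p => .neg p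
  | .neg p => .pos p
  | .and φ ψ => .or φ.nnfNeg ψ.nnfNeg
  | .or φ ψ => .and φ.nnfNeg ψ.nnfNeg
  | .dia φ => .box φ.nnfNeg
  | .box φ => .dia φ.nnfNeg

/-- The embedding of `ML` into `ML(⊻)`. -/
def MLForm.toMLI : MLForm → MLIForm
  | .pos p => .pos p
  | .neg p => .neg p
  | .and φ ψ => .and φ.toMLI ψ.toMLI
  | .or φ ψ => .or φ.toMLI ψ.toMLI
  | .dia φ => .dia φ.toMLI
  | .box φ => .box φ.toMLI

/-- `φ^a`: the formula `φ` if `a = ⊤` and `φ^⊥` if `a = ⊥`. -/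
def mlLit (φ : MLForm) (a : Bool) : MLIForm :=
  if a then φ.toMLI else φ.nnfNeg.toMLI

/-- The conjunction `φ₁^{a₁} ∧ … ∧ φₙ^{aₙ} ∧ (ψ ⊻ ψ^⊥)`. -/
def mlDepConj (φs : List MLForm) (a : List Bool) (ψ : MLForm) : MLIForm :=
  (List.zipWith mlLit φs a).foldr MLIForm.and
    (MLIForm.idis ψ.toMLI ψ.nnfNeg.toMLI)

/-- Big splitting disjunction `⋁` of a (nonempty) list of formulas. -/
def mlBigOr : List MLIForm → MLIForm
  | [] => .pos 0
  | [φ] => φ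
  | φ :: ψ :: l => .or φ (mlBigOr (ψ :: l))

/-- The `ML(⊻)`-formula
`⋁_{a₁,…,aₙ ∈ {⊥,⊤}} (φ₁^{a₁} ∧ … ∧ φₙ^{aₙ} ∧ (ψ ⊻ ψ^⊥))`. -/
def mlDepTranslation (φs : List MLForm) (ψ : MLForm) : MLIForm :=
  mlBigOr ((allBLists φs.length).map fun a => mlDepConj φs a ψ)

/-- Formulas of extended modal dependence logic `EMDL`: modal logic in
negation normal form extended with dependence atoms `=(φ₁,…,φₙ,ψ)` over
`ML`-formulas. -/
inductive EMDLForm : Type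
  | pos : ℕ → EMDLForm
  | neg : ℕ → EMDLForm
  | and : EMDLForm → EMDLForm → EMDLForm
  | or  : EMDLForm → EMDLForm → EMDLForm
  | dia : EMDLForm → EMDLForm
  | box : EMDLForm → EMDLForm
  | dep : List MLForm → MLForm → EMDLForm

/-- Team semantics for `EMDL`. -/
def EMDLSat {W : Type} (K : Kripke W) : Set W → EMDLForm → Prop
  | T, .pos p => T ⊆ K.V p
  | T, .neg p => T ∩ K.V p = ∅
  | T, .and φ ψ => EMDLSat K T φ ∧ EMDLSat K T ψ
  | T, .or φ ψ => ∃ T₁ T₂, T₁ ∪ T₂ = T ∧ EMDLSat K T₁ φ ∧ EMDLSat K T₂ ψ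
  | T, .dia φ => ∃ T', K.step T T' ∧ EMDLSat K T' φ
  | T, .box φ => EMDLSat K (K.img T) φ
  | T, .dep φs ψ => ∀ w ∈ T, ∀ v ∈ T,
      (∀ χ ∈ φs, (MLSat K {w} χ ↔ MLSat K {v} χ)) →
      (MLSat K {w} ψ ↔ MLSat K {v} ψ)

/-- The compositional translation of `EMDL` into `ML(⊻)`, replacing each
dependence atom `=(φ₁,…,φₙ,ψ)` by
`⋁_{a⃗ ∈ {⊥,⊤}ⁿ} (φ₁^{a₁} ∧ … ∧ φₙ^{aₙ} ∧ (ψ ⊻ ψ^⊥))`. -/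
def EMDLForm.toMLI : EMDLForm → MLIForm
  | .pos p => .pos p
  | .neg p => .neg p
  | .and φ ψ => .and φ.toMLI ψ.toMLI
  | .or φ ψ => .or φ.toMLI ψ.toMLI
  | .dia φ => .dia φ.toMLI
  | .box φ => .box φ.toMLI
  | .dep φs ψ => mlDepTranslation φs ψ

/-- `vrank` of an `EMDL`-formula: the number of `⊻`'s in its `ML(⊻)`
translation. -/
def vrankE (φ : EMDLForm) : ℕ := vrank φ.toMLI

/-!
On a fixed Kripke model, a flat (`ML`) formula is just a set of worlds, and the claim follows
from a normal form: every `EMDL`-formula `φ` is equivalent to an intuitionistic disjunction of at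
most `2 ^ vrank φ` flat formulas, i.e. `T ⊨ φ` iff `T ⊆ S` for one of at most `2 ^ vrank φ` sets
of worlds `S`. The normal form passes through the literals, the modalities and both
conjunction and splitting disjunction (the numbers of disjuncts multiply), and a dependence atom
`=(φ₁,…,φₙ,ψ)` is the disjunction, over the `2 ^ 2 ^ n` Boolean functions `g` of the truth values
of `φ₁,…,φₙ`, of the flat formula "the truth value of `ψ` is `g` of those of the `φᵢ`".
A property of this shape is `N`-coherent: if `T` lies in none of the `≤ N` sets, one witness
world outside each of them gives a subteam of size `≤ N` which fails as well.
-/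

section UnionOfIic

variable {W : Type}

/-- On a fixed model a flat formula is a set of worlds, so this says that `P` is expressed by an
intuitionistic disjunction of at most `n` flat formulas. -/
def IsUnionOfIic (P : Set W → Prop) (n : ℕ) : Prop :=
  ∃ 𝒮 : Finset (Set W), 𝒮.card ≤ n ∧ ∀ T, P T ↔ ∃ S ∈ 𝒮, T ⊆ S

namespace IsUnionOfIic

variable {P Q : Set W → Prop} {n m : ℕ}

theorem of_iff (hP : IsUnionOfIic P n) (hPQ : ∀ T, P T ↔ Q T) : IsUnionOfIic Q n := by
  obtain ⟨𝒮, h𝒮, hP⟩ := hP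
  exact ⟨𝒮, h𝒮, fun T => (hPQ T).symm.trans (hP T)⟩

theorem subset (S : Set W) : IsUnionOfIic (· ⊆ S) 1 :=
  ⟨{S}, by simp, fun T => by simp⟩

theorem and (hP : IsUnionOfIic P n) (hQ : IsUnionOfIic Q m) :
    IsUnionOfIic (fun T => P T ∧ Q T) (n * m) := by
  classical
  obtain ⟨𝒮, h𝒮, hP⟩ := hP
  obtain ⟨𝒯, h𝒯, hQ⟩ := hQ
  refine ⟨Finset.image₂ (· ∩ ·) 𝒮 𝒯,
    (Finset.card_image₂_le _ _ _).trans (Nat.mul_le_mul h𝒮 h𝒯), fun T => ?_⟩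
  simp only [hP, hQ, Finset.exists_mem_image₂, Set.subset_inter_iff]
  exact ⟨fun ⟨⟨S, hS, hTS⟩, S', hS', hTS'⟩ => ⟨S, hS, S', hS', hTS, hTS'⟩,
    fun ⟨S, hS, S', hS', hTS, hTS'⟩ => ⟨⟨S, hS, hTS⟩, S', hS', hTS'⟩⟩

theorem split (hP : IsUnionOfIic P n) (hQ : IsUnionOfIic Q m) :
    IsUnionOfIic (fun T => ∃ T₁ T₂, T₁ ∪ T₂ = T ∧ P T₁ ∧ Q T₂) (n * m) := by
  classical
  obtain ⟨𝒮, h𝒮, hP⟩ := hP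
  obtain ⟨𝒯, h𝒯, hQ⟩ := hQ
  refine ⟨Finset.image₂ (· ∪ ·) 𝒮 𝒯,
    (Finset.card_image₂_le _ _ _).trans (Nat.mul_le_mul h𝒮 h𝒯), fun T => ?_⟩
  simp only [hP, hQ, Finset.exists_mem_image₂]
  constructor
  · rintro ⟨T₁, T₂, rfl, ⟨S, hS, hTS⟩, S', hS', hTS'⟩
    exact ⟨S, hS, S', hS', Set.union_subset_union hTS hTS'⟩
  · rintro ⟨S, hS, S', hS', hT⟩
    refine ⟨T ∩ S, T ∩ S', ?_, ⟨S, hS, Set.inter_subset_right⟩, S', hS', Set.inter_subset_right⟩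
    rw [← Set.inter_union_distrib_left, Set.inter_eq_left.2 hT]

theorem step (K : Kripke W) (hP : IsUnionOfIic P n) :
    IsUnionOfIic (fun T => ∃ T', K.step T T' ∧ P T') n := by
  classical
  obtain ⟨𝒮, h𝒮, hP⟩ := hP
  refine ⟨𝒮.image fun S => {w | ∃ v ∈ S, K.R w v}, Finset.card_image_le.trans h𝒮, fun T => ?_⟩
  simp only [hP, Finset.exists_mem_image]
  constructor
  · rintro ⟨T', ⟨hsucc, -⟩, S, hS, hT'S⟩
    refine ⟨S, hS, fun w hw => ?_⟩
    obtain ⟨v, hv, hwv⟩ := hsucc w hw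
    exact ⟨v, hT'S hv, hwv⟩
  · rintro ⟨S, hS, hT⟩
    refine ⟨K.img T ∩ S, ⟨fun w hw => ?_, fun v hv => hv.1⟩, S, hS, Set.inter_subset_right⟩
    obtain ⟨v, hv, hwv⟩ := hT hw
    exact ⟨v, ⟨⟨w, hw, hwv⟩, hv⟩, hwv⟩

theorem img (K : Kripke W) (hP : IsUnionOfIic P n) : IsUnionOfIic (fun T => P (K.img T)) n := by
  classical
  obtain ⟨𝒮, h𝒮, hP⟩ := hP
  refine ⟨𝒮.image fun S => {w | ∀ v, K.R w v → v ∈ S}, Finset.card_image_le.trans h𝒮,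
    fun T => ?_⟩
  simp only [hP, Finset.exists_mem_image]
  refine exists_congr fun S => and_congr_right fun _ => ?_
  simp only [Kripke.img, Set.subset_def, Set.mem_ofPred_eq]
  exact ⟨fun h w hw v hwv => h v ⟨w, hw, hwv⟩, fun h v ⟨w, hw, hwv⟩ => h w hw v hwv⟩

/-- The disjuncts are the flat properties `b = g ∘ f`, one for each `g : α → Bool`. -/
theorem dependence {α : Type} [Fintype α] (f : W → α) (b : W → Bool) :
    IsUnionOfIic (fun T => ∀ w ∈ T, ∀ v ∈ T, f w = f v → b w = b v) (2 ^ Fintype.card α) := by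
  classical
  refine ⟨Finset.univ.image fun g : α → Bool => {w | b w = g (f w)}, ?_, fun T => ?_⟩
  · calc _ ≤ (Finset.univ : Finset (α → Bool)).card := Finset.card_image_le
      _ = 2 ^ Fintype.card α := by simp
  · simp only [Finset.mem_image, Finset.mem_univ, true_and, exists_exists_eq_and]
    constructor
    · intro hdep
      refine ⟨fun a => decide (∃ v ∈ T, f v = a ∧ b v = true), fun w hw => ?_⟩
      show b w = decide (∃ v ∈ T, f v = f w ∧ b v = true)
      cases hbw : b w
      · refine (decide_eq_false ?_).symm
        rintro ⟨v, hv, hfv, hbv⟩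
        rw [hdep w hw v hv hfv.symm, hbv] at hbw
        cases hbw
      · exact (decide_eq_true ⟨w, hw, rfl, hbw⟩).symm
    · rintro ⟨g, hT⟩ w hw v hv hfwv
      rw [hT hw, hT hv, hfwv]

theorem encard_coherent (hP : IsUnionOfIic P n) (T : Set W) :
    P T ↔ ∀ T' ⊆ T, T'.encard ≤ n → P T' := by
  classical
  obtain ⟨𝒮, h𝒮, hP⟩ := hP
  simp only [hP]
  refine ⟨fun ⟨S, hS, hTS⟩ T' hT'T _ => ⟨S, hS, hT'T.trans hTS⟩, fun h => ?_⟩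
  by_contra! hT
  choose pick hpickT hpickS using fun S hS => Set.not_subset.1 (hT S hS)
  let T' : Finset W := 𝒮.attach.image fun S => pick S.1 S.2
  have hT'T : (T' : Set W) ⊆ T := by
    simp only [T', Finset.coe_image, Set.image_subset_iff]
    exact fun S _ => hpickT S.1 S.2
  have hT'card : (T' : Set W).encard ≤ n := by
    rw [Set.encard_coe_eq_coe_finsetCard]
    exact_mod_cast Finset.card_image_le.trans ((Finset.card_attach).le.trans h𝒮)
  obtain ⟨S, hS, hT'S⟩ := h T' hT'T hT'card
  exact hpickS S hS (hT'S (Finset.mem_image_of_mem _ (Finset.mem_attach _ ⟨S, hS⟩)))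

end IsUnionOfIic

end UnionOfIic

theorem vrank_toMLI (χ : MLForm) : vrank χ.toMLI = 0 := by
  induction χ <;> simp [MLForm.toMLI, vrank, *]

theorem vrank_mlLit (φ : MLForm) (a : Bool) : vrank (mlLit φ a) = 0 := by
  cases a <;> simp [mlLit, vrank_toMLI]

theorem vrank_mlBigOr (L : List MLIForm) : vrank (mlBigOr L) = (L.map vrank).sum := by
  induction L using mlBigOr.induct <;> simp_all [mlBigOr, vrank]

theorem vrank_mlDepConj (φs : List MLForm) (a : List Bool) (ψ : MLForm) :
    vrank (mlDepConj φs a ψ) = 1 := by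
  induction φs generalizing a with
  | nil => simp [mlDepConj, vrank, vrank_toMLI]
  | cons χ φs ih =>
    cases a with
    | nil => simp [mlDepConj, vrank, vrank_toMLI]
    | cons c a => simpa [mlDepConj, vrank, vrank_mlLit] using ih a

theorem length_allBLists (n : ℕ) : (allBLists n).length = 2 ^ n := by
  induction n with
  | zero => rfl
  | succ n ih => simp [allBLists, List.length_flatMap, ih, pow_succ, mul_comm]

theorem vrankE_dep (φs : List MLForm) (ψ : MLForm) :
    vrankE (.dep φs ψ) = 2 ^ φs.length := by
  simp [vrankE, EMDLForm.toMLI, mlDepTranslation, vrank_mlBigOr, Function.comp_def,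
    vrank_mlDepConj, length_allBLists]

theorem isUnionOfIic_emdlSat {W : Type} (K : Kripke W) (φ : EMDLForm) :
    IsUnionOfIic (EMDLSat K · φ) (2 ^ vrankE φ) := by
  induction φ with
  | pos p => exact IsUnionOfIic.subset (K.V p)
  | neg p =>
    exact (IsUnionOfIic.subset (K.V p)ᶜ).of_iff fun T =>
      Set.subset_compl_iff_disjoint_right.trans Set.disjoint_iff_inter_eq_empty
  | and φ ψ ihφ ihψ =>
    rw [show vrankE (.and φ ψ) = vrankE φ + vrankE ψ from rfl, pow_add]
    exact ihφ.and ihψ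
  | or φ ψ ihφ ihψ =>
    rw [show vrankE (.or φ ψ) = vrankE φ + vrankE ψ from rfl, pow_add]
    exact ihφ.split ihψ
  | dia φ ih => exact ih.step K
  | box φ ih => exact ih.img K
  | dep φs ψ =>
    classical
    let truthValues (w : W) (i : Fin φs.length) : Bool := decide (MLSat K {w} φs[i])
    have h := IsUnionOfIic.dependence truthValues fun w => decide (MLSat K {w} ψ)
    rw [Fintype.card_fun, Fintype.card_bool, Fintype.card_fin] at h
    rw [vrankE_dep]
    refine h.of_iff fun T => forall₂_congr fun w _ => forall₂_congr fun v _ => ?_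
    refine imp_congr ?_ decide_eq_decide
    simp only [truthValues, funext_iff, Fin.forall_iff, decide_eq_decide,
      List.forall_mem_iff_getElem, Fin.getElem_fin]

theorem emdl_coherence_general {W : Type} (K : Kripke W) (T : Set W)
    (φ : EMDLForm) :
    EMDLSat K T φ ↔
      ∀ T' ⊆ T, T'.encard ≤ (2 ^ vrankE φ : ℕ) → EMDLSat K T' φ :=
  (isUnionOfIic_emdlSat K φ).encard_coherent T

/-- Every `EMDL`-formula `φ` is `2^{vrank φ}`-coherent,
where `vrank φ` counts the `⊻`'s of the `ML(⊻)`-translation of `φ`. -/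
theorem emdl_coherence {W : Type} [Nonempty W] (K : Kripke W) (T : Set W)
    (φ : EMDLForm) :
    EMDLSat K T φ ↔
      ∀ T' ⊆ T, T'.encard ≤ (2 ^ vrankE φ : ℕ) → EMDLSat K T' φ :=
  emdl_coherence_general K T φ
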